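/- For every (b,d) ∈ P, i.e. 0 < b < d, there exists an integer H ≥ 3 such that for every integer h ≥ H there exists N₂ ∈ ℕ (depending on (b,d) and h) such that for all integers N ≥ N₂ the following holds: every integer k* ∈ {0, 1, …, ⌊N/2⌋} at which the function k ↦ F( cos(2πk/N), T_h(cos(2πk/N)), b, d ) attains its minimum over {0, 1, …, ⌊N/2⌋} satisfies ⌈N/(4h)⌉ ≤ k* ≤ ⌈N/(2h)⌉. -/

import Mathlib

open Real

noncomputable def F (x y b d : ℝ) : ℝ :=
  -b*d*x^2 + (b*d^2*y - b*(b+d) - d*(b+1)*(b+2*d))*x + b*d*(b+d)*y + (b+1)*(b+d)*(b+2*d)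

noncomputable def cheb (h : ℕ) (x : ℝ) : ℝ := (Polynomial.Chebyshev.T ℝ h).eval x

/-
Write `F x y b d = Q x + c x * y` with `c x = b d (d x + b + d) > 0` on `[-1, 1]`, and
evaluate at `x = cos θ`, `y = cos (h θ) = T_h (cos θ)`. While `h θ ≤ π / 2` the coupling
term is nonnegative and `Q` is decreasing, so such modes lie above `F 1 0`. The first mode
`k₀ = ⌈N / (2h)⌉` past the resonance `h θ = π` has `y ≈ -1` and small `θ`, hence lies about
`b² d` below `F 1 0`. Beyond `k₀`, `F x y ≥ F x (-1)`, which decreases in `x` with slope at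
least `b d²`; one more step in `k` lowers `cos θ` by at least `8 / (h N)`, which outweighs
the `O((h / N)²)` by which `k₀` misses the resonance.
-/

open Filter

lemma cheb_cos (h : ℕ) (θ : ℝ) : cheb h (cos θ) = cos (h * θ) := by
  simp [cheb]

section Algebra

variable {b d x x' y : ℝ}

lemma F_one_zero_le (hb : 0 < b) (hbd : b < d) (hx₁ : -1 ≤ x) (hx₂ : x ≤ 1) (hy : 0 ≤ y) :
    F 1 0 b d ≤ F x y b d := by
  have hd : 0 < d := hb.trans hbd
  have hQ : 0 ≤ (1 - x) * (b * d * (x + 1) + b * (b + d) + d * (b + 1) * (b + 2 * d)) := by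
    have : 0 ≤ x + 1 := by linarith
    apply mul_nonneg <;> [linarith; positivity]
  have hc : 0 ≤ b * d * (d * x + b + d) * y := by
    have : 0 ≤ d * x + b + d := by nlinarith
    positivity
  unfold F
  linarith

lemma F_neg_one_le (hb : 0 < b) (hbd : b < d) (hx : -1 ≤ x) (hy : -1 ≤ y) :
    F x (-1) b d ≤ F x y b d := by
  have hd : 0 < d := hb.trans hbd
  unfold F
  nlinarith [mul_nonneg (mul_nonneg (mul_pos hb hd).le (by linarith : 0 ≤ y + 1))
    (by nlinarith : 0 ≤ d * x + b + d)]

lemma F_neg_one_add_le (hb : 0 < b) (hbd : b < d) (hx : -1 ≤ x) (hxx' : x ≤ x') :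
    F x' (-1) b d + b * d ^ 2 * (x' - x) ≤ F x (-1) b d := by
  have hd : 0 < d := hb.trans hbd
  unfold F
  nlinarith [mul_nonneg (mul_nonneg (sub_nonneg.2 hxx') (mul_pos hb hd).le)
      (by linarith : 0 ≤ x + x' + 2),
    mul_nonneg (sub_nonneg.2 hxx') (mul_pos (mul_pos hd hd) hb).le,
    mul_nonneg (sub_nonneg.2 hxx') (mul_pos hb hd).le, mul_nonneg (sub_nonneg.2 hxx') hb.le,
    mul_nonneg (mul_nonneg (sub_nonneg.2 hxx') (mul_pos hb hd).le) hd.le]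

lemma F_le_F_neg_one_add (hb : 0 < b) (hbd : b < d) (hx₂ : x ≤ 1) (hy : -1 ≤ y) :
    F x y b d ≤ F x (-1) b d + b * d * (b + 2 * d) * (y + 1) := by
  have hd : 0 < d := hb.trans hbd
  unfold F
  nlinarith [mul_nonneg (mul_nonneg (mul_pos (mul_pos hb hd) hd).le (by linarith : 0 ≤ y + 1))
    (sub_nonneg.2 hx₂)]

-- `b (b + d) + d (b + 1) (b + 2d) + 2 b d` bounds the slope of `Q = F · 0` on `[-1, 1]`.
lemma F_neg_one_le_F_one_zero (hb : 0 < b) (hbd : b < d) (hx : -1 ≤ x) :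
    F x (-1) b d ≤
      F 1 0 b d - b ^ 2 * d + (b * (b + d) + d * (b + 1) * (b + 2 * d) + 2 * b * d) * (1 - x) := by
  have hd : 0 < d := hb.trans hbd
  unfold F
  nlinarith [mul_nonneg (mul_pos hb hd).le (sq_nonneg (1 - x)),
    mul_nonneg (mul_nonneg (mul_pos hb hd).le hd.le) (by linarith : 0 ≤ 1 + x)]

end Algebra

lemma cos_sub_cos_add_two_mul_ge {α δ : ℝ} (hα : 0 ≤ α) (hδ : 0 ≤ δ) (hαδ : α + δ ≤ π / 2) :
    8 / π ^ 2 * α * δ ≤ cos α - cos (α + 2 * δ) := by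
  have hsum : cos α - cos (α + 2 * δ) = 2 * sin (α + δ) * sin δ := by
    rw [cos_sub_cos, show (α + (α + 2 * δ)) / 2 = α + δ by ring,
      show (α - (α + 2 * δ)) / 2 = -δ by ring, sin_neg]
    ring
  have h₁ : 2 / π * α ≤ sin (α + δ) :=
    (mul_le_mul_of_nonneg_left (by linarith) (by positivity)).trans (mul_le_sin (by linarith) hαδ)
  have h₂ : 2 / π * δ ≤ sin δ := mul_le_sin hδ (by linarith)
  calc 8 / π ^ 2 * α * δ = 2 * (2 / π * α) * (2 / π * δ) := by field_simp; ring
    _ ≤ 2 * sin (α + δ) * sin δ := by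
      have := mul_le_mul h₁ h₂ (by positivity) ((by positivity : (0:ℝ) ≤ 2 / π * α).trans h₁)
      linarith
    _ = cos α - cos (α + 2 * δ) := hsum.symm

lemma cos_pi_add_le (η : ℝ) : cos (π + η) ≤ -1 + η ^ 2 / 2 := by
  rw [cos_add, cos_pi, sin_pi]
  linarith [one_sub_sq_div_two_le_cos (x := η)]

section Mode

variable {b d h θ : ℝ}

lemma F_one_zero_le_mode (hb : 0 < b) (hbd : b < d) (hθ₁ : 0 ≤ h * θ) (hθ₂ : h * θ ≤ π / 2) :
    F 1 0 b d ≤ F (cos θ) (cos (h * θ)) b d :=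
  F_one_zero_le hb hbd (neg_one_le_cos _) (cos_le_one _)
    (cos_nonneg_of_mem_Icc ⟨by linarith [pi_pos], hθ₂⟩)

lemma mode_le_F_neg_one_add (hb : 0 < b) (hbd : b < d) :
    F (cos θ) (cos (h * θ)) b d ≤
      F (cos θ) (-1) b d + b * d * (b + 2 * d) * (h * θ - π) ^ 2 / 2 := by
  have hcos : cos (h * θ) ≤ -1 + (h * θ - π) ^ 2 / 2 := by
    simpa using cos_pi_add_le (h * θ - π)
  have hbd' : 0 ≤ b * d * (b + 2 * d) := by have := hb.trans hbd; positivity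
  have := F_le_F_neg_one_add hb hbd (cos_le_one θ) (neg_one_le_cos (h * θ))
  nlinarith [mul_le_mul_of_nonneg_left hcos hbd']

lemma mode_lt_F_one_zero (hb : 0 < b) (hbd : b < d)
    (hθ : (b * (b + d) + d * (b + 1) * (b + 2 * d) + 2 * b * d) * θ ^ 2 ≤ b ^ 2 * d)
    (hη : b * d * (b + 2 * d) * (h * θ - π) ^ 2 < b ^ 2 * d) :
    F (cos θ) (cos (h * θ)) b d < F 1 0 b d := by
  have hL : 0 ≤ b * (b + d) + d * (b + 1) * (b + 2 * d) + 2 * b * d := by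
    have := hb.trans hbd; positivity
  have hcos : 1 - cos θ ≤ θ ^ 2 / 2 := by linarith [one_sub_sq_div_two_le_cos (x := θ)]
  have := F_neg_one_le_F_one_zero hb hbd (neg_one_le_cos θ)
  have := mode_le_F_neg_one_add (h := h) (θ := θ) hb hbd
  nlinarith [mul_le_mul_of_nonneg_left hcos hL]

lemma F_neg_one_add_le_mode {θ₀ : ℝ} (hb : 0 < b) (hbd : b < d) (hθ : cos θ ≤ cos θ₀) :
    F (cos θ₀) (-1) b d + b * d ^ 2 * (cos θ₀ - cos θ) ≤ F (cos θ) (cos (h * θ)) b d :=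
  (F_neg_one_add_le hb hbd (neg_one_le_cos θ) hθ).trans
    (F_neg_one_le hb hbd (neg_one_le_cos θ) (neg_one_le_cos _))

end Mode

lemma resonant_angle_bounds {h N : ℝ} (hh : 0 < h) (hN : 0 < N) :
    π / h ≤ 2 * π * ⌈N / (2 * h)⌉₊ / N ∧ 2 * π * ⌈N / (2 * h)⌉₊ / N < π / h + 2 * π / N := by
  have hlo : N / (2 * h) ≤ ⌈N / (2 * h)⌉₊ := Nat.le_ceil _
  have hhi : (⌈N / (2 * h)⌉₊ : ℝ) < N / (2 * h) + 1 := Nat.ceil_lt_add_one (by positivity)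
  have hπN : 0 < 2 * π / N := by positivity
  have e : π / h = 2 * π / N * (N / (2 * h)) := by field_simp
  have e' : 2 * π * ⌈N / (2 * h)⌉₊ / N = 2 * π / N * ⌈N / (2 * h)⌉₊ := by ring
  rw [e, e']
  constructor
  · exact mul_le_mul_of_nonneg_left hlo hπN.le
  · nlinarith [mul_lt_mul_of_pos_left hhi hπN]

section Resonance

variable {b d h N θ₀ : ℝ}

lemma resonant_mode_lt (hb : 0 < b) (hbd : b < d) (hh : 3 ≤ h) (hNh : 6 * h ≤ N)
    (hhL : 4 * π ^ 2 * (b * (b + d) + d * (b + 1) * (b + 2 * d) + 2 * b * d) ≤ b ^ 2 * d * h ^ 2)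
    (hN₁ : 4 * π ^ 2 * (b * d * (b + 2 * d)) * h ^ 2 < b ^ 2 * d * N ^ 2)
    (hN₂ : π ^ 2 * (b * d * (b + 2 * d)) * h ^ 3 < 4 * b * d ^ 2 * N)
    (hθ₀ : π / h ≤ θ₀) (hθ₀' : θ₀ ≤ π / h + 2 * π / N) :
    F (cos θ₀) (cos (h * θ₀)) b d < F 1 0 b d ∧
      F (cos θ₀) (cos (h * θ₀)) b d < F (cos θ₀) (-1) b d + b * d ^ 2 * (8 / (h * N)) := by
  have hd : 0 < d := hb.trans hbd
  have hh0 : 0 < h := by linarith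
  have hN0 : 0 < N := by linarith
  have hπ := pi_pos
  have hcM : 0 < b * d * (b + 2 * d) := by positivity
  have hη₀ : 0 ≤ h * θ₀ - π := by
    have := mul_le_mul_of_nonneg_left hθ₀ hh0.le
    rw [mul_div_cancel₀ _ hh0.ne'] at this
    linarith
  have hηN : (h * θ₀ - π) * N ≤ 2 * π * h := by
    have := mul_le_mul_of_nonneg_left hθ₀' (mul_pos hh0 hN0).le
    have e : h * N * (π / h + 2 * π / N) = π * N + 2 * π * h := by field_simp
    nlinarith
  have hηsq : ((h * θ₀ - π) * N) ^ 2 ≤ (2 * π * h) ^ 2 :=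
    pow_le_pow_left₀ (mul_nonneg hη₀ hN0.le) hηN 2
  refine ⟨mode_lt_F_one_zero hb hbd ?_ ?_, (mode_le_F_neg_one_add hb hbd).trans_lt ?_⟩
  · have hθh : θ₀ * h ≤ 2 * π := by nlinarith
    have : (θ₀ * h) ^ 2 ≤ (2 * π) ^ 2 := pow_le_pow_left₀ (by nlinarith) hθh 2
    refine le_of_mul_le_mul_left ?_ (by positivity : 0 < h ^ 2)
    nlinarith [mul_le_mul_of_nonneg_left this (by positivity :
      0 ≤ b * (b + d) + d * (b + 1) * (b + 2 * d) + 2 * b * d)]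
  · refine lt_of_mul_lt_mul_left ?_ (by positivity : 0 ≤ N ^ 2)
    nlinarith [mul_le_mul_of_nonneg_left hηsq hcM.le]
  · rw [add_lt_add_iff_left, show b * d ^ 2 * (8 / (h * N)) = 8 * b * d ^ 2 / (h * N) by ring,
      lt_div_iff₀ (by positivity)]
    refine lt_of_mul_lt_mul_left ?_ hN0.le
    nlinarith [mul_le_mul_of_nonneg_left hηsq (by positivity : 0 ≤ b * d * (b + 2 * d) * h)]

lemma F_neg_one_add_le_mode_of_le {θ : ℝ} (hb : 0 < b) (hbd : b < d) (hh : 0 < h) (hN : 0 < N)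
    (hθ₀ : π / h ≤ θ₀) (hθ₀' : θ₀ + π / N ≤ π / 2) (hθ : θ₀ + 2 * π / N ≤ θ)
    (hθπ : θ ≤ π) :
    F (cos θ₀) (-1) b d + b * d ^ 2 * (8 / (h * N)) ≤ F (cos θ) (cos (h * θ)) b d := by
  have hπ := pi_pos
  have hθ₀0 : 0 ≤ θ₀ := (by positivity : 0 ≤ π / h).trans hθ₀
  have hgap := cos_sub_cos_add_two_mul_ge hθ₀0 (by positivity : 0 ≤ π / N) hθ₀'
  have hcos : cos θ ≤ cos (θ₀ + 2 * (π / N)) :=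
    cos_le_cos_of_nonneg_of_le_pi (by positivity) hθπ (by rwa [← mul_div_assoc])
  have h8 : 8 / (h * N) ≤ 8 / π ^ 2 * θ₀ * (π / N) :=
    calc 8 / (h * N) = 8 / π ^ 2 * (π / h) * (π / N) := by field_simp
      _ ≤ 8 / π ^ 2 * θ₀ * (π / N) := by gcongr
  have hd : 0 < d := hb.trans hbd
  calc F (cos θ₀) (-1) b d + b * d ^ 2 * (8 / (h * N))
      ≤ F (cos θ₀) (-1) b d + b * d ^ 2 * (cos θ₀ - cos θ) := by gcongr; linarith
    _ ≤ F (cos θ) (cos (h * θ)) b d :=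
      F_neg_one_add_le_mode hb hbd (by linarith [(by positivity : 0 ≤ 8 / (h * N))])

end Resonance

lemma most_unstable_mode_bounds {b d : ℝ} (hb : 0 < b) (hbd : b < d) {h N k : ℕ} (hh : 3 ≤ h)
    (hhL : 4 * π ^ 2 * (b * (b + d) + d * (b + 1) * (b + 2 * d) + 2 * b * d) ≤ b ^ 2 * d * h ^ 2)
    (hNh : 6 * h ≤ N) (hN₁ : 4 * π ^ 2 * (b * d * (b + 2 * d)) * h ^ 2 < b ^ 2 * d * N ^ 2)
    (hN₂ : π ^ 2 * (b * d * (b + 2 * d)) * h ^ 3 < 4 * b * d ^ 2 * N) (hk : k ≤ N / 2)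
    (hmin : ∀ j ≤ N / 2, F (cos (2 * π * k / N)) (cos (h * (2 * π * k / N))) b d ≤
      F (cos (2 * π * j / N)) (cos (h * (2 * π * j / N))) b d) :
    (N : ℝ) / (4 * h) ≤ k ∧ k ≤ ⌈(N : ℝ) / (2 * h)⌉₊ := by
  have hπ := pi_pos
  have hh' : (3 : ℝ) ≤ h := by exact_mod_cast hh
  have hNh' : 6 * (h : ℝ) ≤ N := by exact_mod_cast hNh
  have hh0 : (0 : ℝ) < h := by linarith
  have hN0 : (0 : ℝ) < N := by linarith
  have hπh : π / h ≤ π / 3 := div_le_div_of_nonneg_left hπ.le (by norm_num) hh'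
  have hπN : π / N ≤ π / 18 := div_le_div_of_nonneg_left hπ.le (by norm_num) (by linarith)
  have hkπ : 2 * π * k / N ≤ π := by
    have : (k : ℝ) * 2 ≤ N := by exact_mod_cast (Nat.le_div_iff_mul_le two_pos).1 hk
    rw [div_le_iff₀ hN0]
    nlinarith
  have h2πN : 2 * π / N = 2 * (π / N) := mul_div_assoc _ _ _
  set k₀ := ⌈(N : ℝ) / (2 * h)⌉₊
  obtain ⟨hθ₀, hθ₀'⟩ := resonant_angle_bounds hh0 hN0
  have hk₀ : k₀ ≤ N / 2 := by
    have : 2 * π * k₀ / N < π := by linarith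
    rw [div_lt_iff₀ hN0] at this
    have : (k₀ : ℝ) * 2 < N := by nlinarith
    exact (Nat.le_div_iff_mul_le two_pos).2 (by exact_mod_cast this.le)
  obtain ⟨hlt₁, hlt₂⟩ := resonant_mode_lt hb hbd hh' hNh' hhL hN₁ hN₂ hθ₀ hθ₀'.le
  have hmin₀ := hmin k₀ hk₀
  constructor
  · by_contra! hlt
    have hθ : (h : ℝ) * (2 * π * k / N) ≤ π / 2 := by
      rw [lt_div_iff₀ (by positivity)] at hlt
      rw [mul_div_assoc', div_le_iff₀ hN0]
      nlinarith
    linarith [F_one_zero_le_mode hb hbd (by positivity) hθ]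
  · by_contra! hlt
    have hθ : 2 * π * k₀ / N + 2 * π / N ≤ 2 * π * k / N := by
      rw [← add_div, ← mul_add_one]
      gcongr
      exact_mod_cast hlt
    linarith [F_neg_one_add_le_mode_of_le hb hbd hh0 hN0 hθ₀ (by linarith) hθ hkπ]

lemma eventually_lt_mul_natCast_pow {a : ℝ} (ha : 0 < a) {n : ℕ} (hn : n ≠ 0) (c : ℝ) :
    ∀ᶠ m : ℕ in atTop, c < a * (m : ℝ) ^ n :=
  (((tendsto_pow_atTop hn).comp tendsto_natCast_atTop_atTop).const_mul_atTop ha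
    ).eventually_gt_atTop c

/-- Theorem (discrete bifurcation, most unstable mode): for `(b,d) ∈ P`, for all
sufficiently large `h` and then all sufficiently large `N`, every minimizer `k*` over
`{0,…,⌊N/2⌋}` of the mode-stability function satisfies `⌈N/(4h)⌉ ≤ k* ≤ ⌈N/(2h)⌉`. -/
theorem discrete_bifurcation_most_unstable_mode (b d : ℝ) (hb : 0 < b) (hbd : b < d) :
    ∃ H : ℕ, 3 ≤ H ∧ ∀ h : ℕ, H ≤ h →
      ∃ N₂ : ℕ, ∀ N : ℕ, N₂ ≤ N →
        ∀ kstar : ℕ, kstar ≤ N / 2 →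
          (∀ k : ℕ, k ≤ N / 2 →
            F (cos (2*π*kstar/N)) (cheb h (cos (2*π*kstar/N))) b d ≤
              F (cos (2*π*k/N)) (cheb h (cos (2*π*k/N))) b d) →
          ⌈(N : ℝ)/(4*h)⌉ ≤ (kstar : ℤ) ∧ (kstar : ℤ) ≤ ⌈(N : ℝ)/(2*h)⌉ := by
  have hd : 0 < d := hb.trans hbd
  obtain ⟨H, hH⟩ := eventually_atTop.1 <| (eventually_ge_atTop 3).and <|
    eventually_lt_mul_natCast_pow (by positivity : 0 < b ^ 2 * d) two_ne_zero
      (4 * π ^ 2 * (b * (b + d) + d * (b + 1) * (b + 2 * d) + 2 * b * d))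
  refine ⟨H, (hH H le_rfl).1, fun h hh => ?_⟩
  obtain ⟨hh3, hhL⟩ := hH h hh
  obtain ⟨N₂, hN₂⟩ := eventually_atTop.1 <| (eventually_ge_atTop (6 * h)).and <|
    (eventually_lt_mul_natCast_pow (by positivity : 0 < b ^ 2 * d) two_ne_zero _).and
      (eventually_lt_mul_natCast_pow (by positivity : 0 < 4 * b * d ^ 2) one_ne_zero
        (π ^ 2 * (b * d * (b + 2 * d)) * h ^ 3))
  refine ⟨N₂, fun N hN k hk hmin => ?_⟩
  obtain ⟨hNh, hN₁, hN₂⟩ := hN₂ N hN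
  simp only [cheb_cos] at hmin
  obtain ⟨hlo, hhi⟩ :=
    most_unstable_mode_bounds hb hbd hh3 hhL.le hNh hN₁ (by simpa using hN₂) hk hmin
  refine ⟨Int.ceil_le.2 (by exact_mod_cast hlo), ?_⟩
  rw [← Int.natCast_ceil_eq_ceil (by positivity)]
  exact_mod_cast hhi
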